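/- arXiv:1110.2716 — 2 statements merged into one kernel-verified Lean document; each statement's English description precedes it below -/
import Mathlib

section
/- Let S be a t-switchable subset of N (not necessarily t-signed). Then the permanental ideal J^{⟨t⟩} is contained in Q^{⟨t⟩}_S = Var^{⟨t⟩}_S + J̃^{⟨t⟩}_S. -/
open MvPolynomial Finset

/-- The index set `N = [r 1] × ⋯ × [r n]`, realized as dependent functions. -/
abbrev Idx {n : ℕ} (r : Fin n → ℕ) := ∀ i, Fin (r i)

variable {n : ℕ} {r : Fin n → ℕ}

/-- The switch `s(K,a,b)`: `b i` in the components of `K`, `a i` elsewhere. -/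
def sw (K : Finset (Fin n)) (a b : Idx r) : Idx r := fun i => if i ∈ K then b i else a i

/-- The distance `d(a,b) = #{i : a i ≠ b i}`. -/
def hdist (a b : Idx r) : ℕ := (univ.filter fun i => a i ≠ b i).card

/-- The truncated distance `d_t(a,b) = #{i ∈ [t] : a i ≠ b i}`. -/
def hdistT (t : ℕ) (a b : Idx r) : ℕ :=
  (univ.filter fun i : Fin n => (i : ℕ) < t ∧ a i ≠ b i).card

/-- `c : ℕ → N` is a path of length `m` from `a` to `b` inside `S`:
consecutive elements differ in exactly one component. -/
def IsPath (S : Set (Idx r)) (a b : Idx r) (m : ℕ) (c : ℕ → Idx r) : Prop :=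
  c 0 = a ∧ c m = b ∧ (∀ j ≤ m, c j ∈ S) ∧ ∀ j < m, hdist (c j) (c (j + 1)) = 1

/-- `a` and `b` are connected in `S`. -/
def Connected (S : Set (Idx r)) (a b : Idx r) : Prop := ∃ m c, IsPath S a b m c

/-- The minimal path length `pl_S(a,b)`. -/
noncomputable def pl (S : Set (Idx r)) (a b : Idx r) : ℕ :=
  sInf {m | ∃ c, IsPath S a b m c}

/-- `S` is `t`-switchable. -/
def Switchable (t : ℕ) (S : Set (Idx r)) : Prop :=
  ∀ a ∈ S, ∀ b ∈ S, hdist a b = 2 → ∀ i : Fin n, (i : ℕ) < t →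
    sw {i} a b ∈ S ∧ sw {i} b a ∈ S

/-- `S` is `t`-signed: `t`-switchable, and each connectedness class satisfies one of:
constant first `t` coordinates, pairwise distance at most 1, or path-independent
parity of path lengths. -/
def Signed (t : ℕ) (S : Set (Idx r)) : Prop :=
  Switchable t S ∧
  ∀ a ∈ S,
    (∀ b c, Connected S a b → Connected S a c → ∀ i : Fin n, (i : ℕ) < t → b i = c i) ∨
    (∀ b c, Connected S a b → Connected S a c → hdist b c ≤ 1) ∨
    (∀ b c, Connected S a b → Connected S a c →
      ∀ m m' p p', IsPath S b c m p → IsPath S b c m' p' → m % 2 = m' % 2)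

variable (k : Type*) [Field k]

/-- The generalized determinant `f_{i,a,b}`. -/
noncomputable def fdet (i : Fin n) (a b : Idx r) : MvPolynomial (Idx r) k :=
  X a * X b - X (sw {i} a b) * X (sw {i} b a)

/-- The generalized permanent `g_{i,a,b}`. -/
noncomputable def gperm (i : Fin n) (a b : Idx r) : MvPolynomial (Idx r) k :=
  X a * X b + X (sw {i} a b) * X (sw {i} b a)

/-- The binomial `h_{S,K,a,b}`. -/
noncomputable def hbin (S : Set (Idx r)) (K : Finset (Fin n)) (a b : Idx r) :
    MvPolynomial (Idx r) k :=
  X a * X b - (-1) ^ (K.card * (pl S a b - 1)) * (X (sw K a b) * X (sw K b a))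

/-- The slice permanental ideal `J^⟨t⟩`. -/
noncomputable def Jt (t : ℕ) : Ideal (MvPolynomial (Idx r) k) :=
  Ideal.span {p | ∃ (a b : Idx r) (i : Fin n),
    hdist a b = 2 ∧ (i : ℕ) < t ∧ a i ≠ b i ∧ p = gperm k i a b}

/-- The ideal `J̃^⟨t⟩_S`. -/
noncomputable def Jtilde (t : ℕ) (S : Set (Idx r)) : Ideal (MvPolynomial (Idx r) k) :=
  Ideal.span {p | ∃ (a b : Idx r) (i : Fin n),
    Connected S a b ∧ (i : ℕ) < t ∧ a i ≠ b i ∧ p = hbin k S {i} a b}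

/-- The ideal `Var^⟨t⟩_S = (x_a : a ∉ S)`. -/
noncomputable def VarIdeal (S : Set (Idx r)) : Ideal (MvPolynomial (Idx r) k) :=
  Ideal.span {p | ∃ a ∉ S, p = X a}

/-- The ideal `Q^⟨t⟩_S = Var^⟨t⟩_S + J̃^⟨t⟩_S`. -/
noncomputable def Qideal (t : ℕ) (S : Set (Idx r)) : Ideal (MvPolynomial (Idx r) k) :=
  VarIdeal k S + Jtilde k t S

/-- The ideal `Ĵ^⟨t⟩`. -/
noncomputable def Jhat (t : ℕ) : Ideal (MvPolynomial (Idx r) k) :=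
  Ideal.span {p | ∃ (a b : Idx r) (i : Fin n),
    hdist a b = 3 ∧ hdistT t a b = 3 ∧ (i : ℕ) < t ∧ a i ≠ b i ∧ p = gperm k i a b}

/-- `S` is a maximal `t`-signed set. -/
noncomputable def MaximalSigned (t : ℕ) (S : Set (Idx r)) : Prop :=
  Signed t S ∧ ∀ T : Set (Idx r), Signed t T → S ⊆ T → Qideal k t S ≤ Qideal k t T


lemma hdist_eq_hammingDist (a b : Idx r) : hdist a b = hammingDist a b := rfl

lemma sw_singleton_apply (i : Fin n) (a b : Idx r) (l : Fin n) :
    sw {i} a b l = if l = i then b l else a l := by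
  simp [sw]

lemma hdist_sw_singleton_left {i : Fin n} {a b : Idx r} (hi : a i ≠ b i) :
    hdist a (sw {i} a b) = 1 := by
  have : (univ.filter fun l => a l ≠ sw {i} a b l) = {i} := by
    ext l
    by_cases h : l = i <;> simp [sw_singleton_apply, h, hi]
  rw [hdist, this, card_singleton]

lemma hdist_sw_singleton_right {i : Fin n} {a b : Idx r} (hi : a i ≠ b i) :
    hdist (sw {i} a b) b + 1 = hdist a b := by
  have : (univ.filter fun l => sw {i} a b l ≠ b l)
      = (univ.filter fun l => a l ≠ b l).erase i := by
    ext l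
    by_cases h : l = i <;> simp [sw_singleton_apply, h]
  rw [hdist, hdist, this, card_erase_add_one (by simp [hi])]

lemma hdist_sw_sw (K : Finset (Fin n)) (a b : Idx r) :
    hdist (sw K a b) (sw K b a) = hdist a b := by
  unfold hdist
  congr 1
  ext l
  by_cases h : l ∈ K <;> simp [sw, h, ne_comm]

lemma sw_sw_sw (K : Finset (Fin n)) (a b : Idx r) : sw K (sw K a b) (sw K b a) = a := by
  funext l
  by_cases h : l ∈ K <;> simp [sw, h]

lemma IsPath.hdist_le {S : Set (Idx r)} {a b : Idx r} {m : ℕ} {c : ℕ → Idx r}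
    (hc : IsPath S a b m c) : hdist a b ≤ m := by
  obtain ⟨hc0, hcm, -, hstep⟩ := hc
  have key : ∀ j ≤ m, hdist a (c j) ≤ j := by
    intro j
    induction j with
    | zero => simp [← hc0, hdist_eq_hammingDist]
    | succ j ih =>
      intro hj
      have := hammingDist_triangle a (c j) (c (j + 1))
      have := hstep j hj
      simp only [hdist_eq_hammingDist] at *
      omega
  simpa [hcm] using key m le_rfl

lemma pl_eq_of_isPath_of_hdist_eq {S : Set (Idx r)} {a b : Idx r} {m : ℕ} {c : ℕ → Idx r}
    (hc : IsPath S a b m c) (hm : hdist a b = m) : pl S a b = m :=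
  le_antisymm (Nat.sInf_le ⟨c, hc⟩)
    (le_csInf ⟨m, c, hc⟩ fun _ ⟨_, hp⟩ => hm ▸ hp.hdist_le)

lemma isPath_two {S : Set (Idx r)} {a c b : Idx r} (ha : a ∈ S) (hc : c ∈ S) (hb : b ∈ S)
    (hac : hdist a c = 1) (hcb : hdist c b = 1) :
    IsPath S a b 2 (fun j => if j = 0 then a else if j = 1 then c else b) := by
  refine ⟨rfl, rfl, fun j hj => ?_, fun j hj => ?_⟩
  · interval_cases j <;> simpa
  · interval_cases j <;> simpa

lemma Switchable.mem_of_sw_mem {t : ℕ} {S : Set (Idx r)} (hS : Switchable t S) {i : Fin n}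
    (hit : (i : ℕ) < t) {a b : Idx r} (hd : hdist a b = 2)
    (ha' : sw {i} a b ∈ S) (hb' : sw {i} b a ∈ S) : a ∈ S ∧ b ∈ S := by
  have := hS _ ha' _ hb' (by rw [hdist_sw_sw, hd]) i hit
  rwa [sw_sw_sw, sw_sw_sw] at this

lemma gperm_eq_hbin {S : Set (Idx r)} {i : Fin n} {a b : Idx r} (hpl : pl S a b = 2) :
    gperm k i a b = hbin k S {i} a b := by
  simp [gperm, hbin, hpl]

lemma X_mul_X_mem_varIdeal {S : Set (Idx r)} {a b : Idx r} (hab : ¬(a ∈ S ∧ b ∈ S)) :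
    (X a * X b : MvPolynomial (Idx r) k) ∈ VarIdeal k S := by
  rcases not_and_or.mp hab with ha | hb
  · exact Ideal.mul_mem_right _ _ (Ideal.subset_span ⟨a, ha, rfl⟩)
  · exact Ideal.mul_mem_left _ _ (Ideal.subset_span ⟨b, hb, rfl⟩)

/-- Inside `S` the path `a, s(i,a,b), b` realizes `d(a,b) = 2`, so the sign in `h_{S,i,a,b}` is
`+` and `h_{S,i,a,b} = g_{i,a,b}`. -/
lemma gperm_mem_jtilde {t : ℕ} {S : Set (Idx r)} (hS : Switchable t S) {i : Fin n}
    (hit : (i : ℕ) < t) {a b : Idx r} (hd : hdist a b = 2) (hi : a i ≠ b i)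
    (ha : a ∈ S) (hb : b ∈ S) : gperm k i a b ∈ Jtilde k t S := by
  have hpath := isPath_two ha (hS a ha b hb hd i hit).1 hb (hdist_sw_singleton_left hi)
    (by have := hdist_sw_singleton_right hi; omega)
  rw [gperm_eq_hbin k (pl_eq_of_isPath_of_hdist_eq hpath hd)]
  exact Ideal.subset_span ⟨a, b, i, ⟨2, _, hpath⟩, hit, hi, rfl⟩

lemma gperm_mem_varIdeal {t : ℕ} {S : Set (Idx r)} (hS : Switchable t S) {i : Fin n}
    (hit : (i : ℕ) < t) {a b : Idx r} (hd : hdist a b = 2) (hab : ¬(a ∈ S ∧ b ∈ S)) :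
    gperm k i a b ∈ VarIdeal k S :=
  Ideal.add_mem _ (X_mul_X_mem_varIdeal k hab)
    (X_mul_X_mem_varIdeal k fun h => hab (hS.mem_of_sw_mem hit hd h.1 h.2))

theorem stmt10 (t : ℕ) (S : Set (Idx r)) (hS : Switchable t S) :
    Jt k t ≤ Qideal k t S := by
  rw [Jt, Ideal.span_le]
  rintro _ ⟨a, b, i, hd, hit, hi, rfl⟩
  by_cases hab : a ∈ S ∧ b ∈ S
  · exact Ideal.mem_sup_right (gperm_mem_jtilde k hS hit hd hi hab.1 hab.2)
  · exact Ideal.mem_sup_left (gperm_mem_varIdeal k hS hit hd hab)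
end

section
/- Let S be a t-switchable set, and let a, b ∈ S be connected with d(a,b) ≥ 2 and a_i ≠ b_i for some i ∈ [t]. Suppose there exist paths in S from a to b whose lengths have different parities. Then the ideal Σ_{j≠i} (G_{{i,j},{i}}) contains a monomial all of whose variable subscripts are elements of S. -/
open MvPolynomial Finset

variable {n : ℕ} {r : Fin n → ℕ}

variable (k : Type*) [Field k]

/-!
Write `c[α]` for `c` with its `i`-th coordinate replaced by `α`. Switchability makes membership of
`c[α]` in `S` constant along a path of `S`, so every point visited by a path from `a` to `b`,
moved to any level (`i`-th coordinate) the path visits, stays in `S`. For points `c, d` differing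
in a single coordinate other than `i` and levels `α ≠ β`, the slice permanent
`x_{c[α]} x_{d[β]} + x_{c[β]} x_{d[α]}` is a generator.

If a path visits a third level `γ ∉ {a_i, b_i}`, the three generators for the pairs of levels
`{a_i, b_i, γ}` at a horizontal step of the path combine to `2 x_{c[a_i]} x_{d[b_i]} x_{c[γ]}`.
Otherwise every vertical step swaps the two levels, and chaining the generators along the
horizontal steps puts `x_a x_b + (-1)^m x_{a[b_i]} x_{b[a_i]}`, times a monomial, in the ideal;
two paths of different parity then give `2 x_a x_b` times a monomial. Finally `2` is a unit.
-/

/-- The ideal `Σ_{j ≠ i} (G_{{i,j},{i}})`. -/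
noncomputable def slicePermIdeal (i : Fin n) : Ideal (MvPolynomial (Idx r) k) :=
  Ideal.span {q | ∃ (c d : Idx r) (j : Fin n), j ≠ i ∧
    (univ.filter fun u => c u ≠ d u) = ({i, j} : Finset (Fin n)) ∧ q = gperm k i c d}

section

open Function

variable {t : ℕ} {S : Set (Idx r)} {i : Fin n} {a b : Idx r} {m : ℕ} {p : ℕ → Idx r}

theorem sw_singleton (i : Fin n) (a b : Idx r) : sw {i} a b = update a i (b i) := by
  funext u
  by_cases hu : u = i
  · subst hu; simp [sw]
  · simp [sw, hu]

theorem hdist_comm (a b : Idx r) : hdist a b = hdist b a := by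
  simp only [hdist, ne_comm]

theorem filter_update_ne_update {c d : Idx r} {x y : Fin (r i)} (hxy : x ≠ y) :
    (univ.filter fun u => update c i x u ≠ update d i y u) =
      insert i (univ.filter fun u => c u ≠ d u) := by
  ext u
  by_cases hu : u = i
  · subst hu; simpa using hxy
  · simp [hu]

theorem ne_iff_of_filter_ne_eq_singleton {c d : Idx r} {l : Fin n}
    (h : (univ.filter fun u => c u ≠ d u) = {l}) (u : Fin n) : c u ≠ d u ↔ u = l := by
  simpa using Finset.ext_iff.1 h u

theorem update_eq_update_of_filter_ne_eq_singleton {c d : Idx r}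
    (h : (univ.filter fun u => c u ≠ d u) = {i}) (x : Fin (r i)) :
    update c i x = update d i x := by
  funext u
  by_cases hu : u = i
  · subst hu; simp
  · simpa [update_of_ne hu] using mt (ne_iff_of_filter_ne_eq_singleton h u).1 hu

theorem exists_ne_of_two_le_hdist (h : 2 ≤ hdist a b) (i : Fin n) :
    ∃ l ≠ i, a l ≠ b l := by
  obtain ⟨l, hl, hli⟩ := exists_mem_ne (s := univ.filter fun l => a l ≠ b l) h i
  exact ⟨l, hli, (mem_filter.1 hl).2⟩

theorem exists_ne_succ_of_ne {α : Type*} (f : ℕ → α) {m : ℕ} (h : f 0 ≠ f m) :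
    ∃ s < m, f s ≠ f (s + 1) := by
  induction m with
  | zero => exact absurd rfl h
  | succ m ih =>
    by_cases hm : f m = f (m + 1)
    · obtain ⟨s, hs, hne⟩ := ih (by rwa [hm])
      exact ⟨s, by omega, hne⟩
    · exact ⟨m, by omega, hm⟩

theorem Switchable.update_mem_of_hdist_eq_one (hS : Switchable t S) (hi : (i : ℕ) < t)
    {c d : Idx r} (hc : c ∈ S) (hcd : hdist c d = 1) {α : Fin (r i)}
    (hd : update d i α ∈ S) : update c i α ∈ S := by
  obtain ⟨l, hl⟩ := card_eq_one.1 hcd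
  by_cases hli : l = i
  · rw [hli] at hl
    rwa [update_eq_update_of_filter_ne_eq_singleton hl]
  by_cases hα : c i = α
  · rwa [← hα, update_eq_self]
  have hfil := filter_update_ne_update (c := c) (d := d) hα
  rw [update_eq_self, hl] at hfil
  have h2 : hdist c (update d i α) = 2 := by
    rw [hdist, hfil, card_pair (Ne.symm hli)]
  simpa [sw_singleton] using (hS c hc _ hd h2 i hi).1

theorem Switchable.update_mem_iff_of_isPath (hS : Switchable t S) (hi : (i : ℕ) < t)
    (hp : IsPath S a b m p) (α : Fin (r i)) {j : ℕ}
    (hj : j ≤ m) : update (p j) i α ∈ S ↔ update a i α ∈ S := by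
  obtain ⟨hp0, -, hpS, hstep⟩ := hp
  induction j with
  | zero => rw [hp0]
  | succ j ih =>
    rw [← ih (by omega)]
    have h1 := hstep j (by omega)
    exact ⟨hS.update_mem_of_hdist_eq_one hi (hpS j (by omega)) h1,
      hS.update_mem_of_hdist_eq_one hi (hpS (j + 1) hj) (by rwa [hdist_comm])⟩

theorem Switchable.update_mem_of_isPath (hS : Switchable t S) (hi : (i : ℕ) < t)
    (hp : IsPath S a b m p) {s j : ℕ}
    (hs : s ≤ m) (hj : j ≤ m) : update (p s) i (p j i) ∈ S := by
  rw [hS.update_mem_iff_of_isPath hi hp _ hs, ← hS.update_mem_iff_of_isPath hi hp _ hj,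
    update_eq_self]
  exact hp.2.2.1 j hj

theorem add_mem_slicePermIdeal {c d : Idx r} {l : Fin n}
    (hl : (univ.filter fun u => c u ≠ d u) = {l}) (hli : l ≠ i) {x y : Fin (r i)}
    (hxy : x ≠ y) :
    X (update c i x) * X (update d i y) + X (update c i y) * X (update d i x) ∈
      slicePermIdeal k i := by
  refine Ideal.subset_span ⟨update c i x, update d i y, l, hli, ?_, ?_⟩
  · rw [filter_update_ne_update hxy, hl]
  · simp [gperm, sw_singleton]

theorem two_mul_mem_slicePermIdeal_of_three_levels {c d : Idx r} {l : Fin n}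
    (hl : (univ.filter fun u => c u ≠ d u) = {l}) (hli : l ≠ i) {α β γ : Fin (r i)}
    (hαβ : α ≠ β) (hβγ : β ≠ γ) (hγα : γ ≠ α) :
    2 * (X (update c i α) * X (update d i β) * X (update c i γ)) ∈ slicePermIdeal k i := by
  have h1 := Ideal.mul_mem_left _ (X (update c i γ)) (add_mem_slicePermIdeal k hl hli hαβ)
  have h2 := Ideal.mul_mem_left _ (X (update c i β)) (add_mem_slicePermIdeal k hl hli hγα)
  have h3 := Ideal.mul_mem_left _ (X (update c i α)) (add_mem_slicePermIdeal k hl hli hβγ)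
  convert add_mem (sub_mem h1 h2) h3 using 1
  ring

/- The factor `if p m i = α then 1 else -1` makes the sign constant across vertical steps, where
`p m` only changes level while `(-1) ^ m` flips. -/
theorem exists_prod_mul_sub_mem_slicePermIdeal {α β : Fin (r i)} (hαβ : α ≠ β)
    (h0 : p 0 i = α) (hstep : ∀ j < m, hdist (p j) (p (j + 1)) = 1)
    (hlev : ∀ j ≤ m, p j i = α ∨ p j i = β) (hmem : ∀ j ≤ m, update (p j) i β ∈ S) :
    ∃ M : Multiset (Idx r), (∀ c ∈ M, c ∈ S) ∧
      (M.map fun c => (X c : MvPolynomial (Idx r) k)).prod *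
        (X (update (p 0) i α) * X (update (p m) i β) -
          (-1) ^ m * (if p m i = α then 1 else -1) *
            (X (update (p 0) i β) * X (update (p m) i α))) ∈ slicePermIdeal k i := by
  induction m with
  | zero => exact ⟨0, by simp, by simp [h0, mul_comm]⟩
  | succ m ih =>
    obtain ⟨M, hMS, hM⟩ := ih (fun j hj => hstep j (by omega)) (fun j hj => hlev j (by omega))
      (fun j hj => hmem j (by omega))
    obtain ⟨l, hl⟩ := card_eq_one.1 (hstep m (by omega))
    by_cases hli : l = i
    · rw [hli] at hl
      have hmi : p m i ≠ p (m + 1) i := (ne_iff_of_filter_ne_eq_singleton hl i).2 rfl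
      have hflip : (if p (m + 1) i = α then 1 else -1 : MvPolynomial (Idx r) k) =
          -(if p m i = α then 1 else -1) := by
        rcases hlev m (by omega) with h | h <;> rcases hlev (m + 1) le_rfl with h' | h' <;>
          simp_all [Ne.symm hαβ]
      refine ⟨M, hMS, ?_⟩
      rw [← update_eq_update_of_filter_ne_eq_singleton hl α,
        ← update_eq_update_of_filter_ne_eq_singleton hl β, hflip]
      convert hM using 3
      ring
    · have hmi : p (m + 1) i = p m i :=
        (not_not.1 (mt (ne_iff_of_filter_ne_eq_singleton hl i).1 (Ne.symm hli))).symm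
      refine ⟨update (p m) i β ::ₘ M, ?_, ?_⟩
      · simpa using ⟨hmem m (by omega), hMS⟩
      rw [hmi]
      convert add_mem (Ideal.mul_mem_right (X (update (p (m + 1)) i β)) _ hM)
        (Ideal.mul_mem_left _ ((-1) ^ m * (if p m i = α then 1 else -1) *
          X (update (p 0) i β) * (M.map fun c => (X c : MvPolynomial (Idx r) k)).prod)
          (add_mem_slicePermIdeal k hl hli hαβ)) using 1
      simp only [Multiset.map_cons, Multiset.prod_cons]
      ring

theorem Switchable.exists_prod_mul_add_mem_of_two_levels (hS : Switchable t S)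
    (hi : (i : ℕ) < t) (hp : IsPath S a b m p) (hne : a i ≠ b i)
    (hlev : ∀ j ≤ m, p j i = a i ∨ p j i = b i) :
    ∃ M : Multiset (Idx r), (∀ c ∈ M, c ∈ S) ∧
      (M.map fun c => (X c : MvPolynomial (Idx r) k)).prod *
        (X a * X b + (-1) ^ m * (X (update a i (b i)) * X (update b i (a i)))) ∈
          slicePermIdeal k i := by
  have ⟨hp0, hpm, _, hstep⟩ := hp
  obtain ⟨M, hMS, hM⟩ := exists_prod_mul_sub_mem_slicePermIdeal k hne (by rw [hp0]) hstep
    (by simpa only [hp0] using hlev)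
    (fun j hj => by simpa [hpm] using hS.update_mem_of_isPath hi hp hj le_rfl)
  refine ⟨M, hMS, ?_⟩
  convert hM using 2
  simp [hp0, hpm, Ne.symm hne]

theorem Switchable.exists_two_mul_prod_mem_of_third_level (hS : Switchable t S)
    (hi : (i : ℕ) < t) (hp : IsPath S a b m p) (hne : a i ≠ b i)
    {l : Fin n} (hli : l ≠ i) (hl : a l ≠ b l) {j : ℕ} (hj : j ≤ m) (ha : p j i ≠ a i)
    (hb : p j i ≠ b i) :
    ∃ M : Multiset (Idx r), M ≠ 0 ∧ (∀ c ∈ M, c ∈ S) ∧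
      2 * (M.map fun c => (X c : MvPolynomial (Idx r) k)).prod ∈ slicePermIdeal k i := by
  have ⟨hp0, hpm, _, hstep⟩ := hp
  obtain ⟨s, hs, hsl⟩ := exists_ne_succ_of_ne (fun s => p s l) (m := m) (by simpa [hp0, hpm])
  obtain ⟨l', hl'⟩ := card_eq_one.1 (hstep s hs)
  obtain rfl : l = l' := (ne_iff_of_filter_ne_eq_singleton hl' l).1 hsl
  have hgrid := fun s' (hs' : s' ≤ m) j' (hj' : j' ≤ m) => hS.update_mem_of_isPath hi hp hs' hj'
  refine ⟨{update (p s) i (a i), update (p (s + 1)) i (b i), update (p s) i (p j i)}, by simp,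
    ?_, ?_⟩
  · simp only [Multiset.insert_eq_cons, Multiset.mem_cons, Multiset.mem_singleton]
    rintro c (rfl | rfl | rfl)
    · simpa [hp0] using hgrid s hs.le 0 (Nat.zero_le m)
    · simpa [hpm] using hgrid (s + 1) hs m le_rfl
    · exact hgrid s hs.le j hj
  · convert two_mul_mem_slicePermIdeal_of_three_levels k hl' hli hne (Ne.symm hb) ha using 2
    simp [mul_assoc]

theorem Switchable.exists_two_mul_prod_mem_or_exists_prod_mul_add_mem (hS : Switchable t S)
    (hi : (i : ℕ) < t) (hp : IsPath S a b m p) (hne : a i ≠ b i) (hd : 2 ≤ hdist a b) :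
    (∃ M : Multiset (Idx r), M ≠ 0 ∧ (∀ c ∈ M, c ∈ S) ∧
      2 * (M.map fun c => (X c : MvPolynomial (Idx r) k)).prod ∈ slicePermIdeal k i) ∨
    ∃ M : Multiset (Idx r), (∀ c ∈ M, c ∈ S) ∧
      (M.map fun c => (X c : MvPolynomial (Idx r) k)).prod *
        (X a * X b + (-1) ^ m * (X (update a i (b i)) * X (update b i (a i)))) ∈
          slicePermIdeal k i := by
  by_cases hlev : ∀ j ≤ m, p j i = a i ∨ p j i = b i
  · exact .inr (hS.exists_prod_mul_add_mem_of_two_levels k hi hp hne hlev)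
  simp only [not_forall, not_or] at hlev
  obtain ⟨j, hj, ha, hb⟩ := hlev
  obtain ⟨l, hli, hl⟩ := exists_ne_of_two_le_hdist hd i
  exact .inl (hS.exists_two_mul_prod_mem_of_third_level k hi hp hne hli hl hj ha hb)

end

theorem neg_one_pow_add_neg_one_pow_eq_zero {R : Type*} [Ring R] {m m' : ℕ}
    (h : m % 2 ≠ m' % 2) : (-1 : R) ^ m + (-1) ^ m' = 0 := by
  rw [neg_one_pow_eq_pow_mod_two, neg_one_pow_eq_pow_mod_two (n := m')]
  rcases Nat.mod_two_eq_zero_or_one m with h1 | h1 <;>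
    rcases Nat.mod_two_eq_zero_or_one m' with h2 | h2 <;> simp_all

theorem two_mul_mul_mem_of_mul_add_neg_one_pow_mem {R : Type*} [CommRing R] {I : Ideal R}
    {x y P P' : R} {m m' : ℕ} (hpar : m % 2 ≠ m' % 2) (h : P * (x + (-1) ^ m * y) ∈ I)
    (h' : P' * (x + (-1) ^ m' * y) ∈ I) : 2 * (x * (P * P')) ∈ I := by
  convert add_mem (I.mul_mem_left P' h) (I.mul_mem_left P h') using 1
  linear_combination (-(P * P' * y)) * neg_one_pow_add_neg_one_pow_eq_zero (R := R) hpar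

theorem stmt11 (h2 : (2 : k) ≠ 0) (t : ℕ) (S : Set (Idx r)) (hS : Switchable t S)
    (a b : Idx r) (hd : 2 ≤ hdist a b)
    (i : Fin n) (hi : (i : ℕ) < t) (hne : a i ≠ b i)
    (m m' : ℕ) (p p' : ℕ → Idx r) (hp : IsPath S a b m p) (hp' : IsPath S a b m' p')
    (hpar : m % 2 ≠ m' % 2) :
    ∃ M : Multiset (Idx r), M ≠ 0 ∧ (∀ c ∈ M, c ∈ S) ∧
      (M.map fun c => (X c : MvPolynomial (Idx r) k)).prod ∈
        Ideal.span {q : MvPolynomial (Idx r) k | ∃ (c d : Idx r) (j : Fin n), j ≠ i ∧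
          (univ.filter fun u => c u ≠ d u) = ({i, j} : Finset (Fin n)) ∧
          q = gperm k i c d} := by
  suffices h : ∃ M : Multiset (Idx r), M ≠ 0 ∧ (∀ c ∈ M, c ∈ S) ∧
      2 * (M.map fun c => (X c : MvPolynomial (Idx r) k)).prod ∈ slicePermIdeal k i by
    obtain ⟨M, hM0, hMS, hM⟩ := h
    have h2 : IsUnit (2 : MvPolynomial (Idx r) k) := by
      simpa only [map_ofNat] using (Ne.isUnit h2).map (C : k →+* MvPolynomial (Idx r) k)
    exact ⟨M, hM0, hMS, (Ideal.unit_mul_mem_iff_mem _ h2).1 hM⟩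
  obtain h | ⟨M, hMS, hM⟩ :=
    hS.exists_two_mul_prod_mem_or_exists_prod_mul_add_mem k hi hp hne hd
  · exact h
  obtain h | ⟨M', hM'S, hM'⟩ :=
    hS.exists_two_mul_prod_mem_or_exists_prod_mul_add_mem k hi hp' hne hd
  · exact h
  refine ⟨a ::ₘ b ::ₘ (M + M'), by simp, ?_, ?_⟩
  · have haS : a ∈ S := hp.1 ▸ hp.2.2.1 0 (Nat.zero_le m)
    have hbS : b ∈ S := hp.2.1 ▸ hp.2.2.1 m le_rfl
    simpa [or_imp, forall_and] using ⟨haS, hbS, hMS, hM'S⟩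
  · simpa [Multiset.prod_cons, Multiset.map_add, Multiset.prod_add, mul_assoc] using
      two_mul_mul_mem_of_mul_add_neg_one_pow_mem hpar hM hM'
end
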